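/- arXiv:1703.07709 — 2 statements merged into one kernel-verified Lean document; each statement's English description precedes it below -/
import Mathlib

section
/- Let ι be a finite type and A : Matrix ι ι ℝ a real square matrix whose off-diagonal entries are nonnegative, i.e., A i j ≥ 0 whenever i ≠ j. Then for every t ≥ 0 and every vector v : ι → ℝ with v i ≥ 0 for all i, all components of exp(t • A) *ᵥ v are nonnegative: (exp(t • A) *ᵥ v) i ≥ 0 for all i. -/
open scoped Matrix

/-!
Shifting a Metzler matrix `A` by a large enough scalar `c • 1` makes it entrywise nonnegative,
so every term of the exponential series of `A + c • 1` is nonnegative. Since `c • 1` is central,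
`exp A = exp (-c) • exp (A + c • 1)`, which is therefore entrywise nonnegative as well.
-/

namespace Matrix

variable {ι : Type*}

def IsMetzler {α : Type*} [Zero α] [LE α] (A : Matrix ι ι α) : Prop :=
  ∀ i j, i ≠ j → 0 ≤ A i j

section OrderedRing

variable {α : Type*} [Ring α] [LinearOrder α] [IsOrderedRing α] {A : Matrix ι ι α}

theorem IsMetzler.smul (hA : A.IsMetzler) {t : α} (ht : 0 ≤ t) : (t • A).IsMetzler :=
  fun i j hij => mul_nonneg ht (hA i j hij)

theorem IsMetzler.exists_nonneg_add_smul_one [Fintype ι] [DecidableEq ι] (hA : A.IsMetzler) :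
    ∃ c : α, ∀ i j, 0 ≤ (A + c • 1) i j := by
  refine ⟨∑ k, |A k k|, fun i j => ?_⟩
  rcases eq_or_ne i j with rfl | hij
  · have hdiag : |A i i| ≤ ∑ k, |A k k| :=
      Finset.single_le_sum (fun k _ => abs_nonneg (A k k)) (Finset.mem_univ i)
    simp only [add_apply, smul_apply, one_apply_eq, smul_eq_mul, mul_one]
    exact neg_le_iff_add_nonneg.mp ((neg_le_neg hdiag).trans (neg_abs_le _))
  · simpa [one_apply_ne hij] using hA i j hij

end OrderedRing

theorem mulVec_apply_nonneg {m n α : Type*} [Fintype n] [Semiring α] [PartialOrder α]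
    [IsOrderedRing α] {M : Matrix m n α} (hM : ∀ i j, 0 ≤ M i j) {v : n → α}
    (hv : ∀ j, 0 ≤ v j) (i : m) : 0 ≤ (M *ᵥ v) i :=
  Finset.sum_nonneg fun j _ => mul_nonneg (hM i j) (hv j)

variable [Fintype ι] [DecidableEq ι]

open scoped Norms.Operator in
theorem exp_apply_nonneg {B : Matrix ι ι ℝ} (hB : ∀ i j, 0 ≤ B i j) (i j : ι) :
    0 ≤ NormedSpace.exp B i j :=
  ((Pi.hasSum.mp (Pi.hasSum.mp (NormedSpace.exp_series_hasSum_exp' (𝕂 := ℝ) B) i)) j).nonneg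
    fun n => mul_nonneg (by positivity) (pow_apply_nonneg hB n i j)

open scoped Norms.Operator in
theorem exp_add_smul_one (A : Matrix ι ι ℝ) (c : ℝ) :
    NormedSpace.exp (A + c • 1) = Real.exp c • NormedSpace.exp A := by
  have hexp : NormedSpace.exp (algebraMap ℝ (Matrix ι ι ℝ) c) = algebraMap ℝ _ (Real.exp c) := by
    rw [Real.exp_eq_exp_ℝ]
    exact (NormedSpace.algebraMap_exp_comm c).symm
  rw [exp_add_of_commute _ _ ((Commute.one_right A).smul_right c), ← Algebra.algebraMap_eq_smul_one,
    hexp, Algebra.algebraMap_eq_smul_one, mul_smul_one]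

theorem IsMetzler.exp_apply_nonneg {A : Matrix ι ι ℝ} (hA : A.IsMetzler) (i j : ι) :
    0 ≤ NormedSpace.exp A i j := by
  obtain ⟨c, hc⟩ := hA.exists_nonneg_add_smul_one
  have h := Matrix.exp_apply_nonneg hc i j
  rw [exp_add_smul_one, smul_apply, smul_eq_mul] at h
  exact nonneg_of_mul_nonneg_right h (Real.exp_pos c)

end Matrix

/-- **Discrete positivity.** If `A` is a Metzler matrix (all off-diagonal entries
nonnegative), then for every `t ≥ 0` the matrix exponential `exp (t • A)` maps
componentwise-nonnegative vectors to componentwise-nonnegative vectors. -/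
theorem matrix_exp_metzler_preserves_nonneg {ι : Type*} [Fintype ι] [DecidableEq ι]
    (A : Matrix ι ι ℝ) (hA : ∀ i j, i ≠ j → 0 ≤ A i j)
    (t : ℝ) (ht : 0 ≤ t) (v : ι → ℝ) (hv : ∀ i, 0 ≤ v i) :
    ∀ i, 0 ≤ (NormedSpace.exp (t • A) *ᵥ v) i :=
  Matrix.mulVec_apply_nonneg (Matrix.IsMetzler.smul hA ht).exp_apply_nonneg hv
end

section
/- Let α > 0 and p ∈ ℝ, and let u, ρ : ℝ × ℝ → ℝ be twice continuously differentiable functions of (x, t) with ρ(x, t) > 0 for all (x, t). Suppose that u and ρ satisfy the forward-forward mean-field game system with congestion: u_t + (p + u_x)²/(2 ρ^α) = (3/2) ρ^α and ρ_t − ∂_x( (p + u_x) ρ^{1−α} ) = 0 at every point of ℝ × ℝ. Then the function v := p + u_x satisfies the conservation law v_t + ∂_x( v²/(2 ρ^α) − (3/2) ρ^α ) = 0 at every point, so that the pair (v, ρ) solves the system of conservation laws v_t + (v²/(2ρ^α) − (3/2)ρ^α)_x = 0, ρ_t − (ρ^{1−α} v)_x = 0. -/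
/-!
Writing the Hamilton–Jacobi equation as `u_t + H = 0`, its `x`-derivative is
`u_tx + H_x = 0`; by symmetry of the second derivative of the `C²` function `u`,
`u_tx = (p + u_x)_t`, which is the conservation law for `v = p + u_x`. The equation for `ρ`
is the Fokker–Planck equation itself.
-/

section PartialDerivatives

variable {F : Type*} [NormedAddCommGroup F] [NormedSpace ℝ F]

theorem HasFDerivAt.hasDerivAt_partial_fst {f : ℝ × ℝ → F} {f' : ℝ × ℝ →L[ℝ] F} {x t : ℝ}
    (hf : HasFDerivAt f f' (x, t)) : HasDerivAt (fun y => f (y, t)) (f' (1, 0)) x :=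
  hf.comp_hasDerivAt x ((hasDerivAt_id x).prodMk (hasDerivAt_const x t))

theorem HasFDerivAt.hasDerivAt_partial_snd {f : ℝ × ℝ → F} {f' : ℝ × ℝ →L[ℝ] F} {x t : ℝ}
    (hf : HasFDerivAt f f' (x, t)) : HasDerivAt (fun s => f (x, s)) (f' (0, 1)) t :=
  hf.comp_hasDerivAt t ((hasDerivAt_const t x).prodMk (hasDerivAt_id t))

theorem ContDiff.deriv_partial_comm {u : ℝ × ℝ → F} (hu : ContDiff ℝ 2 u) (x t : ℝ) :
    deriv (fun s => deriv (fun y => u (y, s)) x) t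
      = deriv (fun y => deriv (fun s => u (y, s)) t) x := by
  have hDu : ∀ q, HasFDerivAt u (fderiv ℝ u q) q := fun q =>
    (hu.differentiable two_ne_zero q).hasFDerivAt
  have hD2u : HasFDerivAt (fderiv ℝ u) (fderiv ℝ (fderiv ℝ u) (x, t)) (x, t) :=
    ((hu.fderiv_right le_rfl).differentiable one_ne_zero _).hasFDerivAt
  have hux : (fun s => deriv (fun y => u (y, s)) x) = fun s => fderiv ℝ u (x, s) (1, 0) :=
    funext fun s => (hDu (x, s)).hasDerivAt_partial_fst.deriv
  have hut : (fun y => deriv (fun s => u (y, s)) t) = fun y => fderiv ℝ u (y, t) (0, 1) :=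
    funext fun y => (hDu (y, t)).hasDerivAt_partial_snd.deriv
  rw [hux, hut, (hD2u.hasDerivAt_partial_snd.clm_apply (hasDerivAt_const t _)).deriv,
    (hD2u.hasDerivAt_partial_fst.clm_apply (hasDerivAt_const x _)).deriv]
  simpa using (hu.contDiffAt.isSymmSndFDerivAt (by simp)).eq (0, 1) (1, 0)

theorem ContDiff.conservationLaw_of_hamiltonJacobi {u H : ℝ × ℝ → F} (hu : ContDiff ℝ 2 u)
    (hHJ : ∀ x t, deriv (fun s => u (x, s)) t + H (x, t) = 0) (p : F) (x t : ℝ) :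
    deriv (fun s => p + deriv (fun y => u (y, s)) x) t + deriv (fun y => H (y, t)) x = 0 := by
  have hH : (fun y => H (y, t)) = fun y => -deriv (fun s => u (y, s)) t :=
    funext fun y => eq_neg_of_add_eq_zero_right (hHJ y t)
  rw [deriv_const_add, hH, deriv.fun_neg, hu.deriv_partial_comm, add_neg_cancel]

end PartialDerivatives

theorem ffmfg_congestion_to_conservation_laws_general (α : ℝ) (p : ℝ)
    (u ρ : ℝ × ℝ → ℝ) (hu : ContDiff ℝ 2 u)
    (hHJ : ∀ x t, deriv (fun s => u (x, s)) t
        + (p + deriv (fun y => u (y, t)) x) ^ 2 / (2 * ρ (x, t) ^ α)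
        = (3 / 2) * ρ (x, t) ^ α)
    (hFP : ∀ x t, deriv (fun s => ρ (x, s)) t
        - deriv (fun y => (p + deriv (fun z => u (z, t)) y) * ρ (y, t) ^ (1 - α)) x
        = 0) :
    (∀ x t, deriv (fun s => p + deriv (fun y => u (y, s)) x) t
        + deriv (fun y =>
            (p + deriv (fun z => u (z, t)) y) ^ 2 / (2 * ρ (y, t) ^ α)
              - (3 / 2) * ρ (y, t) ^ α) x = 0)
      ∧ (∀ x t, deriv (fun s => ρ (x, s)) t
          - deriv (fun y => ρ (y, t) ^ (1 - α) * (p + deriv (fun z => u (z, t)) y)) x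
          = 0) := by
  refine ⟨hu.conservationLaw_of_hamiltonJacobi (H := fun q =>
      (p + deriv (fun y => u (y, q.2)) q.1) ^ 2 / (2 * ρ q ^ α) - (3 / 2) * ρ q ^ α)
    (fun x t => by rw [add_sub, hHJ, sub_self]) p, fun x t => ?_⟩
  simpa only [mul_comm] using hFP x t

/-- **The forward-forward MFG with congestion as a system of conservation laws.**
If `u, ρ` solve the first-order forward-forward mean-field game system with congestion
`u_t + (p + u_x)²/(2ρ^α) = (3/2)ρ^α`, `ρ_t − ((p + u_x) ρ^{1−α})_x = 0`, with `ρ > 0`,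
then `v := p + u_x` satisfies the conservation law
`v_t + (v²/(2ρ^α) − (3/2)ρ^α)_x = 0`, so that the pair `(v, ρ)` solves the system of
conservation laws `v_t + (v²/(2ρ^α) − (3/2)ρ^α)_x = 0`, `ρ_t − (ρ^{1−α} v)_x = 0`. -/
theorem ffmfg_congestion_to_conservation_laws (α : ℝ) (hα : 0 < α) (p : ℝ)
    (u ρ : ℝ × ℝ → ℝ) (hu : ContDiff ℝ 2 u) (hρ : ContDiff ℝ 2 ρ)
    (hρpos : ∀ x t, 0 < ρ (x, t))
    (hHJ : ∀ x t, deriv (fun s => u (x, s)) t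
        + (p + deriv (fun y => u (y, t)) x) ^ 2 / (2 * ρ (x, t) ^ α)
        = (3 / 2) * ρ (x, t) ^ α)
    (hFP : ∀ x t, deriv (fun s => ρ (x, s)) t
        - deriv (fun y => (p + deriv (fun z => u (z, t)) y) * ρ (y, t) ^ (1 - α)) x
        = 0) :
    (∀ x t, deriv (fun s => p + deriv (fun y => u (y, s)) x) t
        + deriv (fun y =>
            (p + deriv (fun z => u (z, t)) y) ^ 2 / (2 * ρ (y, t) ^ α)
              - (3 / 2) * ρ (y, t) ^ α) x = 0)
      ∧ (∀ x t, deriv (fun s => ρ (x, s)) t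
          - deriv (fun y => ρ (y, t) ^ (1 - α) * (p + deriv (fun z => u (z, t)) y)) x
          = 0) :=
  ffmfg_congestion_to_conservation_laws_general α p u ρ hu hHJ hFP
end
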